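/- arXiv:1301.0192 — 6 statements merged into one kernel-verified Lean document; each statement's English description precedes it below -/
import Mathlib

section
/- Let F be a field and z, z', z'' ∈ F all nonzero with z·z'·z'' = −1 and z'' + z⁻¹ − 1 = 0 (the octahedron phase-space and Lagrangian relations). Then the same relations hold after the cyclic rotation z → z' → z'' → z; that is, z + (z')⁻¹ − 1 = 0 and z' + (z'')⁻¹ − 1 = 0. -/
/-! From `z'' = 1 - z⁻¹` the product relation gives `z' (z - 1) = -1`, i.e. `z' = (1 - z)⁻¹`, which
is the Lagrangian relation for the rotated triple. Since the product relation is itself cyclic,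
applying this step twice gives both rotations. -/

theorem lagrangian_rotate {F : Type*} [Field F] {z z' z'' : F}
    (hprod : z * z' * z'' = -1) (hlag : z'' + z⁻¹ - 1 = 0) :
    z + z'⁻¹ - 1 = 0 := by
  have hprod_ne_zero : z * z' * z'' ≠ 0 := by rw [hprod]; exact neg_ne_zero.mpr one_ne_zero
  have hz : z ≠ 0 := left_ne_zero_of_mul (left_ne_zero_of_mul hprod_ne_zero)
  have hz' : z' ≠ 0 := right_ne_zero_of_mul (left_ne_zero_of_mul hprod_ne_zero)
  have hlag' : z'' * z = z - 1 := by field_simp at hlag; linear_combination hlag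
  field_simp
  linear_combination hprod - z' * hlag'

theorem octahedron_relations_cyclic_general
    {F : Type*} [Field F] (z z' z'' : F)
    (hprod : z * z' * z'' = -1)
    (hlag : z'' + z⁻¹ - 1 = 0) :
    z + z'⁻¹ - 1 = 0 ∧ z' + z''⁻¹ - 1 = 0 := by
  have hrot : z + z'⁻¹ - 1 = 0 := lagrangian_rotate hprod hlag
  have hprod' : z' * z'' * z = -1 := by linear_combination hprod
  exact ⟨hrot, lagrangian_rotate hprod' hrot⟩

/-- The octahedron phase-space relation `z·z'·z'' = −1` together with the
Lagrangian relation `z'' + z⁻¹ − 1 = 0` are invariant under the cyclic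
rotation `z → z' → z'' → z`: one also has `z + (z')⁻¹ − 1 = 0` and
`z' + (z'')⁻¹ − 1 = 0`. -/
theorem octahedron_relations_cyclic
    {F : Type*} [Field F] (z z' z'' : F)
    (hz : z ≠ 0) (hz' : z' ≠ 0) (hz'' : z'' ≠ 0)
    (hprod : z * z' * z'' = -1)
    (hlag : z'' + z⁻¹ - 1 = 0) :
    z + z'⁻¹ - 1 = 0 ∧ z' + z''⁻¹ - 1 = 0 :=
  octahedron_relations_cyclic_general z z' z'' hprod hlag
end

section
/- (Algebraic 2→3 move.) Let F be a field and w₁, w₂, w₃ ∈ F with each wᵢ ≠ 0, wᵢ ≠ 1, and w₁w₂w₃ = 1. Define z₁ := w₂''·w₃' and z₂ := w₂'·w₃''. Then z₁ ≠ 0, z₁ ≠ 1, z₂ ≠ 0, z₂ ≠ 1, and the following five relations hold: z₁·z₂ = w₁; z₁' = w₃''·w₁'; z₁'' = w₁''·w₂'; z₂' = w₁'·w₂''; z₂'' = w₃'·w₁''. -/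
/-!
Solving the gluing constraint for `w₁ = (w₂ w₃)⁻¹` turns every claim into a statement about
rational functions of the two free parameters `s = w₂`, `t = w₃`. The key computations are
`1 - s''t' = (st - 1) / (s(t - 1))` and `1 - s't'' = (1 - st) / (t(1 - s))`: they show that
`z₁, z₂ ≠ 1` exactly because `w₁ ≠ 1`, and after inverting they give `z₁'` and `z₂'`. Everything
else is clearing denominators.
-/

/-- The octahedron parameter `t' := (1−t)⁻¹`. -/
def oPrime {F : Type*} [Field F] (t : F) : F := (1 - t)⁻¹

/-- The octahedron parameter `t'' := 1 − t⁻¹`. -/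
def oDPrime {F : Type*} [Field F] (t : F) : F := 1 - t⁻¹

section OctahedronParameters

variable {F : Type*} [Field F] {s t : F}

lemma oPrime_ne_zero (ht : t ≠ 1) : oPrime t ≠ 0 :=
  inv_ne_zero (sub_ne_zero.mpr ht.symm)

lemma oDPrime_ne_zero (ht : t ≠ 1) : oDPrime t ≠ 0 :=
  sub_ne_zero.mpr (by rwa [ne_comm, inv_ne_one])

lemma oDPrime_inv (t : F) : oDPrime t⁻¹ = 1 - t := by
  rw [oDPrime, inv_inv]

lemma oPrime_inv (ht : t ≠ 0) : oPrime t⁻¹ = t / (t - 1) := by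
  rw [oPrime, ← inv_div, sub_div, div_self ht, one_div]

lemma one_sub_oDPrime_mul_oPrime (hs : s ≠ 0) (ht : t ≠ 1) :
    1 - oDPrime s * oPrime t = (s * t - 1) / (s * (t - 1)) := by
  have : t - 1 ≠ 0 := sub_ne_zero.mpr ht
  have : 1 - t ≠ 0 := sub_ne_zero.mpr ht.symm
  unfold oDPrime oPrime
  field_simp
  ring

lemma one_sub_oPrime_mul_oDPrime (hs : s ≠ 1) (ht : t ≠ 0) :
    1 - oPrime s * oDPrime t = (1 - s * t) / (t * (1 - s)) := by
  have : 1 - s ≠ 0 := sub_ne_zero.mpr hs.symm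
  unfold oDPrime oPrime
  field_simp
  ring

lemma oDPrime_mul_oPrime_ne_one (hs : s ≠ 0) (ht : t ≠ 1) (hst : s * t ≠ 1) :
    oDPrime s * oPrime t ≠ 1 := by
  rw [ne_comm, ← sub_ne_zero, one_sub_oDPrime_mul_oPrime hs ht]
  exact div_ne_zero (sub_ne_zero.mpr hst) (mul_ne_zero hs (sub_ne_zero.mpr ht))

lemma oPrime_mul_oDPrime_ne_one (hs : s ≠ 1) (ht : t ≠ 0) (hst : s * t ≠ 1) :
    oPrime s * oDPrime t ≠ 1 := by
  rw [ne_comm, ← sub_ne_zero, one_sub_oPrime_mul_oDPrime hs ht]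
  exact div_ne_zero (sub_ne_zero.mpr hst.symm) (mul_ne_zero ht (sub_ne_zero.mpr hs.symm))

lemma oDPrime_mul_oPrime_mul_oPrime_mul_oDPrime (hs₀ : s ≠ 0) (hs₁ : s ≠ 1) (ht₀ : t ≠ 0)
    (ht₁ : t ≠ 1) : oDPrime s * oPrime t * (oPrime s * oDPrime t) = (s * t)⁻¹ := by
  have : 1 - s ≠ 0 := sub_ne_zero.mpr hs₁.symm
  have : 1 - t ≠ 0 := sub_ne_zero.mpr ht₁.symm
  unfold oDPrime oPrime
  field_simp
  ring

lemma oPrime_oDPrime_mul_oPrime (hs : s ≠ 0) (ht₀ : t ≠ 0) (ht₁ : t ≠ 1) :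
    oPrime (oDPrime s * oPrime t) = oDPrime t * oPrime (s * t)⁻¹ := by
  rw [oPrime, one_sub_oDPrime_mul_oPrime hs ht₁, inv_div, oPrime_inv (mul_ne_zero hs ht₀)]
  unfold oDPrime
  field_simp

lemma oPrime_oPrime_mul_oDPrime (hs₀ : s ≠ 0) (hs₁ : s ≠ 1) (ht : t ≠ 0) :
    oPrime (oPrime s * oDPrime t) = oPrime (s * t)⁻¹ * oDPrime s := by
  rw [oPrime, one_sub_oPrime_mul_oDPrime hs₁ ht, inv_div, oPrime_inv (mul_ne_zero hs₀ ht),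
    ← neg_sub 1 (s * t), div_neg, oDPrime]
  have : 1 - s ≠ 0 := sub_ne_zero.mpr hs₁.symm
  field_simp
  ring

lemma oDPrime_oDPrime_mul_oPrime (hs₀ : s ≠ 0) (hs₁ : s ≠ 1) (ht : t ≠ 1) :
    oDPrime (oDPrime s * oPrime t) = oDPrime (s * t)⁻¹ * oPrime s := by
  have : s - 1 ≠ 0 := sub_ne_zero.mpr hs₁
  have : 1 - s ≠ 0 := sub_ne_zero.mpr hs₁.symm
  have : 1 - t ≠ 0 := sub_ne_zero.mpr ht.symm
  rw [oDPrime_inv]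
  unfold oDPrime oPrime
  field_simp
  ring

lemma oDPrime_oPrime_mul_oDPrime (hs : s ≠ 1) (ht₀ : t ≠ 0) (ht₁ : t ≠ 1) :
    oDPrime (oPrime s * oDPrime t) = oPrime t * oDPrime (s * t)⁻¹ := by
  have : t - 1 ≠ 0 := sub_ne_zero.mpr ht₁
  have : 1 - t ≠ 0 := sub_ne_zero.mpr ht₁.symm
  have : 1 - s ≠ 0 := sub_ne_zero.mpr hs.symm
  rw [oDPrime_inv]
  unfold oDPrime oPrime
  field_simp
  ring

end OctahedronParameters

theorem two_three_move_general
    {F : Type*} [Field F] (w₁ w₂ w₃ : F)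
    (hw₁1 : w₁ ≠ 1)
    (hw₂0 : w₂ ≠ 0) (hw₂1 : w₂ ≠ 1)
    (hw₃0 : w₃ ≠ 0) (hw₃1 : w₃ ≠ 1)
    (hglue : w₁ * w₂ * w₃ = 1) :
    oDPrime w₂ * oPrime w₃ ≠ 0 ∧ oDPrime w₂ * oPrime w₃ ≠ 1 ∧
    oPrime w₂ * oDPrime w₃ ≠ 0 ∧ oPrime w₂ * oDPrime w₃ ≠ 1 ∧
    (oDPrime w₂ * oPrime w₃) * (oPrime w₂ * oDPrime w₃) = w₁ ∧
    oPrime (oDPrime w₂ * oPrime w₃) = oDPrime w₃ * oPrime w₁ ∧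
    oDPrime (oDPrime w₂ * oPrime w₃) = oDPrime w₁ * oPrime w₂ ∧
    oPrime (oPrime w₂ * oDPrime w₃) = oPrime w₁ * oDPrime w₂ ∧
    oDPrime (oPrime w₂ * oDPrime w₃) = oPrime w₃ * oDPrime w₁ := by
  obtain rfl : w₁ = (w₂ * w₃)⁻¹ := eq_inv_of_mul_eq_one_left (by rwa [← mul_assoc])
  have hw₂₃ : w₂ * w₃ ≠ 1 := inv_ne_one.mp hw₁1
  exact ⟨mul_ne_zero (oDPrime_ne_zero hw₂1) (oPrime_ne_zero hw₃1),
    oDPrime_mul_oPrime_ne_one hw₂0 hw₃1 hw₂₃,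
    mul_ne_zero (oPrime_ne_zero hw₂1) (oDPrime_ne_zero hw₃1),
    oPrime_mul_oDPrime_ne_one hw₂1 hw₃0 hw₂₃,
    oDPrime_mul_oPrime_mul_oPrime_mul_oDPrime hw₂0 hw₂1 hw₃0 hw₃1,
    oPrime_oDPrime_mul_oPrime hw₂0 hw₃0 hw₃1,
    oDPrime_oDPrime_mul_oPrime hw₂0 hw₂1 hw₃1,
    oPrime_oPrime_mul_oDPrime hw₂0 hw₂1 hw₃0,
    oDPrime_oPrime_mul_oDPrime hw₂1 hw₃0 hw₃1⟩

/-- The algebraic 2→3 move: given octahedron parameters `w₁, w₂, w₃`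
(each `≠ 0, 1`) satisfying the internal gluing constraint `w₁w₂w₃ = 1`,
the parameters `z₁ := w₂''·w₃'` and `z₂ := w₂'·w₃''` are again `≠ 0, 1`
and satisfy the five boundary relations `z₁·z₂ = w₁`, `z₁' = w₃''·w₁'`,
`z₁'' = w₁''·w₂'`, `z₂' = w₁'·w₂''`, `z₂'' = w₃'·w₁''`. -/
theorem two_three_move
    {F : Type*} [Field F] (w₁ w₂ w₃ : F)
    (hw₁0 : w₁ ≠ 0) (hw₁1 : w₁ ≠ 1)
    (hw₂0 : w₂ ≠ 0) (hw₂1 : w₂ ≠ 1)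
    (hw₃0 : w₃ ≠ 0) (hw₃1 : w₃ ≠ 1)
    (hglue : w₁ * w₂ * w₃ = 1) :
    oDPrime w₂ * oPrime w₃ ≠ 0 ∧ oDPrime w₂ * oPrime w₃ ≠ 1 ∧
    oPrime w₂ * oDPrime w₃ ≠ 0 ∧ oPrime w₂ * oDPrime w₃ ≠ 1 ∧
    (oDPrime w₂ * oPrime w₃) * (oPrime w₂ * oDPrime w₃) = w₁ ∧
    oPrime (oDPrime w₂ * oPrime w₃) = oDPrime w₃ * oPrime w₁ ∧
    oDPrime (oDPrime w₂ * oPrime w₃) = oDPrime w₁ * oPrime w₂ ∧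
    oPrime (oPrime w₂ * oDPrime w₃) = oPrime w₁ * oDPrime w₂ ∧
    oDPrime (oPrime w₂ * oDPrime w₃) = oPrime w₃ * oDPrime w₁ :=
  two_three_move_general w₁ w₂ w₃ hw₁1 hw₂0 hw₂1 hw₃0 hw₃1 hglue
end

section
/- (Algebraic 3→2 move.) Let F be a field and z₁, z₂ ∈ F with each zᵢ ≠ 0, zᵢ ≠ 1, and z₁z₂ ≠ 1. Define w₁ := z₁·z₂, w₂ := z₁'·z₂'', w₃ := z₁''·z₂'. Then each wᵢ ≠ 0 and wᵢ ≠ 1, the gluing constraint w₁w₂w₃ = 1 holds, and conversely z₁ = w₂''·w₃' and z₂ = w₂'·w₃''. -/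
/-!
Everything follows from the closed form `a'·b'' = (b - 1) / (b (1 - a))`, valid as soon as
`b ≠ 0`; the third new parameter `z₁''·z₂'` is the same expression with `z₁, z₂` swapped.
Inverting it and its complement `1 - a'·b'' = (1 - ab) / (b (1 - a))` gives `(a'·b'')''` and
`(a'·b'')'` as explicit fractions, after which each identity of the move is a rational
identity in `z₁, z₂` whose denominators vanish only at the excluded values.
-/

section OctahedronParameters

variable {F : Type*} [Field F] {a b : F}

theorem oPrime_ne_zero_s5 (ha : a ≠ 1) : oPrime a ≠ 0 :=
  inv_ne_zero (sub_ne_zero.mpr ha.symm)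

theorem oDPrime_ne_zero_s5 (ha : a ≠ 1) : oDPrime a ≠ 0 :=
  sub_ne_zero.mpr fun h => ha (inv_eq_one.mp h.symm)

theorem oPrime_mul_oDPrime_eq (hb : b ≠ 0) :
    oPrime a * oDPrime b = (b - 1) / (b * (1 - a)) := by
  rw [oPrime, oDPrime]
  field_simp

theorem one_sub_oPrime_mul_oDPrime_s5 (ha : a ≠ 1) (hb : b ≠ 0) :
    1 - oPrime a * oDPrime b = (1 - a * b) / (b * (1 - a)) := by
  have : 1 - a ≠ 0 := sub_ne_zero.mpr ha.symm
  rw [oPrime_mul_oDPrime_eq hb]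
  field_simp
  ring

theorem oPrime_mul_oDPrime_ne_one_s5 (ha : a ≠ 1) (hb : b ≠ 0) (hab : a * b ≠ 1) :
    oPrime a * oDPrime b ≠ 1 := by
  rw [ne_comm, ← sub_ne_zero, one_sub_oPrime_mul_oDPrime_s5 ha hb]
  exact div_ne_zero (sub_ne_zero.mpr hab.symm) (mul_ne_zero hb (sub_ne_zero.mpr ha.symm))

theorem oPrime_oPrime_mul_oDPrime_s5 (ha : a ≠ 1) (hb : b ≠ 0) :
    oPrime (oPrime a * oDPrime b) = b * (1 - a) / (1 - a * b) := by
  rw [oPrime, one_sub_oPrime_mul_oDPrime_s5 ha hb, inv_div]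

theorem oDPrime_oPrime_mul_oDPrime_s5 (hb₀ : b ≠ 0) (hb₁ : b ≠ 1) :
    oDPrime (oPrime a * oDPrime b) = (a * b - 1) / (b - 1) := by
  have : b - 1 ≠ 0 := sub_ne_zero.mpr hb₁
  rw [oDPrime, oPrime_mul_oDPrime_eq hb₀, inv_div]
  field_simp
  ring

end OctahedronParameters

/-- The algebraic 3→2 move: given octahedron parameters `z₁, z₂`
(each `≠ 0, 1`) with `z₁z₂ ≠ 1`, the parameters `w₁ := z₁·z₂`,
`w₂ := z₁'·z₂''`, `w₃ := z₁''·z₂'` are each `≠ 0, 1`, satisfy the gluing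
constraint `w₁w₂w₃ = 1`, and conversely `z₁ = w₂''·w₃'` and `z₂ = w₂'·w₃''`. -/
theorem three_two_move
    {F : Type*} [Field F] (z₁ z₂ : F)
    (hz₁0 : z₁ ≠ 0) (hz₁1 : z₁ ≠ 1)
    (hz₂0 : z₂ ≠ 0) (hz₂1 : z₂ ≠ 1)
    (hnd : z₁ * z₂ ≠ 1) :
    z₁ * z₂ ≠ 0 ∧ z₁ * z₂ ≠ 1 ∧
    oPrime z₁ * oDPrime z₂ ≠ 0 ∧ oPrime z₁ * oDPrime z₂ ≠ 1 ∧
    oDPrime z₁ * oPrime z₂ ≠ 0 ∧ oDPrime z₁ * oPrime z₂ ≠ 1 ∧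
    (z₁ * z₂) * (oPrime z₁ * oDPrime z₂) * (oDPrime z₁ * oPrime z₂) = 1 ∧
    z₁ = oDPrime (oPrime z₁ * oDPrime z₂) * oPrime (oDPrime z₁ * oPrime z₂) ∧
    z₂ = oPrime (oPrime z₁ * oDPrime z₂) * oDPrime (oDPrime z₁ * oPrime z₂) := by
  have hnd' : z₂ * z₁ ≠ 1 := mul_comm z₁ z₂ ▸ hnd
  have h₁ : 1 - z₁ ≠ 0 := sub_ne_zero.mpr hz₁1.symm
  have h₂ : 1 - z₂ ≠ 0 := sub_ne_zero.mpr hz₂1.symm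
  have h₁₂ : 1 - z₁ * z₂ ≠ 0 := sub_ne_zero.mpr hnd.symm
  rw [mul_comm (oDPrime z₁)]
  refine ⟨mul_ne_zero hz₁0 hz₂0, hnd,
    mul_ne_zero (oPrime_ne_zero_s5 hz₁1) (oDPrime_ne_zero_s5 hz₂1),
    oPrime_mul_oDPrime_ne_one_s5 hz₁1 hz₂0 hnd,
    mul_ne_zero (oPrime_ne_zero_s5 hz₂1) (oDPrime_ne_zero_s5 hz₁1),
    oPrime_mul_oDPrime_ne_one_s5 hz₂1 hz₁0 hnd', ?_, ?_, ?_⟩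
  · rw [oPrime_mul_oDPrime_eq hz₂0, oPrime_mul_oDPrime_eq hz₁0]
    field_simp
    ring
  · rw [oDPrime_oPrime_mul_oDPrime_s5 hz₂0 hz₂1, oPrime_oPrime_mul_oDPrime_s5 hz₂1 hz₁0, mul_comm z₂]
    field_simp
    ring
  · rw [oPrime_oPrime_mul_oDPrime_s5 hz₁1 hz₂0, oDPrime_oPrime_mul_oDPrime_s5 hz₁0 hz₁1, mul_comm z₂]
    field_simp
    ring
end

section
/- Let F be a field and z, z', z'' ∈ F all nonzero. Let M be the 2×2 matrix product (E·H(−z''))·(E·H(−z'))·(E·H(−z)), where E is the elementary unipotent matrix with rows (1,0) and (1,1), and H(t) is the diagonal matrix diag(1,t). Then M is the identity matrix if and only if z·z'·z'' = −1 and z'' + z⁻¹ − 1 = 0. -/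
/-! Each snake step `E·H(−t)` is the lower triangular matrix `[[1,0],[1,−t]]`, and such matrices
multiply like affine maps, so the holonomy is `[[1,0],[1 − z'' + z''z', −zz'z'']]`. It is the
identity iff `zz'z'' = −1` and `1 − z'' + z''z' = 0`; the first relation gives `z'z'' = −z⁻¹`,
which turns the second into `z'' + z⁻¹ − 1 = 0`. -/

namespace Matrix

section Semiring

variable {R : Type*} [Semiring R]

theorem lowerTriangular_fin_two_mul (a b c d : R) :
    !![1, 0; a, b] * !![1, 0; c, d] = !![1, 0; a + b * c, b * d] := by
  simp

theorem lowerTriangular_fin_two_eq_one_iff (a b : R) :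
    !![1, 0; a, b] = 1 ↔ a = 0 ∧ b = 1 := by
  simp [one_fin_two]

end Semiring

theorem elementary_mul_finFlip {R : Type*} [Ring R] (t : R) :
    !![1, 0; 1, 1] * !![1, 0; 0, -t] = !![1, 0; 1, -t] := by
  rw [lowerTriangular_fin_two_mul, mul_zero, add_zero, one_mul]

theorem snake_holonomy_eq {R : Type*} [CommRing R] (a b c : R) :
    (!![1, 0; 1, 1] : Matrix (Fin 2) (Fin 2) R) * !![1, 0; 0, -a] *
      (!![1, 0; 1, 1] * !![1, 0; 0, -b]) * (!![1, 0; 1, 1] * !![1, 0; 0, -c]) =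
      !![1, 0; 1 - a + a * b, -(a * b * c)] := by
  rw [elementary_mul_finFlip, elementary_mul_finFlip, elementary_mul_finFlip,
    lowerTriangular_fin_two_mul, lowerTriangular_fin_two_mul]
  ring_nf

end Matrix

theorem octahedron_relation_iff {F : Type*} [Field F] {z z' z'' : F}
    (h : z * z' * z'' = -1) : 1 - z'' + z'' * z' = 0 ↔ z'' + z⁻¹ - 1 = 0 := by
  have hinv : z⁻¹ = -(z' * z'') := inv_eq_of_mul_eq_one_right (by linear_combination -h)
  rw [hinv]
  constructor <;> intro h' <;> linear_combination -h'

theorem snake_holonomy_trivial_iff_general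
    {F : Type*} [Field F] (z z' z'' : F) :
    ((!![1, 0; 1, 1] : Matrix (Fin 2) (Fin 2) F) * !![1, 0; 0, -z'']) *
      ((!![1, 0; 1, 1] : Matrix (Fin 2) (Fin 2) F) * !![1, 0; 0, -z']) *
      ((!![1, 0; 1, 1] : Matrix (Fin 2) (Fin 2) F) * !![1, 0; 0, -z]) = 1 ↔
    z * z' * z'' = -1 ∧ z'' + z⁻¹ - 1 = 0 := by
  have hdet : -(z'' * z' * z) = 1 ↔ z * z' * z'' = -1 := by
    constructor <;> intro h <;> linear_combination -h
  rw [Matrix.snake_holonomy_eq, Matrix.lowerTriangular_fin_two_eq_one_iff, and_comm, hdet]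
  exact and_congr_right octahedron_relation_iff

/-- Snake holonomy around a black tetrahedron: the product
`(E·H(−z''))·(E·H(−z'))·(E·H(−z))` of elementary unipotent matrices
`E = [[1,0],[1,1]]` and fin-flip matrices `H(t) = diag(1,t)` is the identity
matrix if and only if the octahedron relations `z·z'·z'' = −1` and
`z'' + z⁻¹ − 1 = 0` hold. -/
theorem snake_holonomy_trivial_iff
    {F : Type*} [Field F] (z z' z'' : F)
    (hz : z ≠ 0) (hz' : z' ≠ 0) (hz'' : z'' ≠ 0) :
    ((!![1, 0; 1, 1] : Matrix (Fin 2) (Fin 2) F) * !![1, 0; 0, -z'']) *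
      ((!![1, 0; 1, 1] : Matrix (Fin 2) (Fin 2) F) * !![1, 0; 0, -z']) *
      ((!![1, 0; 1, 1] : Matrix (Fin 2) (Fin 2) F) * !![1, 0; 0, -z]) = 1 ↔
    z * z' * z'' = -1 ∧ z'' + z⁻¹ - 1 = 0 :=
  snake_holonomy_trivial_iff_general z z' z''
end

section
/- Let F be a field, V an F-vector space of dimension K ≥ 1, and f : V → V a linear endomorphism whose characteristic polynomial has K pairwise distinct roots in F (equivalently, f is diagonalizable with K distinct eigenvalues). Then the set of complete f-invariant flags in V — chains 0 = W₀ ≤ W₁ ≤ ⋯ ≤ W_K = V with dim Wᵢ = i and f(Wᵢ) ⊆ Wᵢ for all i — is finite and has exactly K! elements. -/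
/-!
The eigenspaces of `f` for the `μ j` are `K = dim V` independent nonzero subspaces, so they are
lines spanning `V`. An invariant subspace is the sum of its intersections with them, hence the sum
of the eigenlines it contains; so `s ↦ ⨆ j ∈ s, f.eigenspace (μ j)` is an order embedding of
`Finset (Fin K)` onto the invariant subspaces that turns cardinality into dimension. Invariant
complete flags thus correspond to complete chains of subsets of `Fin K`, and each such chain is
the chain of initial segments of a unique bijection `Fin K ≃ Fin K`.
-/

open Module

def rankedChains {β : Type*} [Preorder β] (r : β → ℕ) (n : ℕ) : Set (Fin (n + 1) → β) :=
  {S | (∀ i : Fin n, S i.castSucc ≤ S i.succ) ∧ ∀ i, r (S i) = i}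

theorem OrderEmbedding.image_comp_rankedChains {α β : Type*} [Preorder α] [Preorder β]
    (Φ : α ↪o β) {r : α → ℕ} {r' : β → ℕ} (hr : ∀ a, r' (Φ a) = r a) (n : ℕ) :
    (Φ ∘ ·) '' rankedChains r n = {W ∈ rankedChains r' n | ∀ i, W i ∈ Set.range Φ} := by
  ext W
  constructor
  · rintro ⟨S, ⟨hmono, hrank⟩, rfl⟩
    exact ⟨⟨fun i => Φ.le_iff_le.mpr (hmono i), fun i => (hr _).trans (hrank i)⟩,
      fun i => ⟨S i, rfl⟩⟩
  · rintro ⟨⟨hmono, hrank⟩, hrange⟩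
    choose S hS using hrange
    refine ⟨S, ⟨fun i => Φ.le_iff_le.mp ?_, fun i => ?_⟩, funext hS⟩
    · rw [hS, hS]
      exact hmono i
    · rw [← hr, hS, hrank]

namespace Finset

variable {α : Type*} {n : ℕ}

def chainOfEquiv [Fintype α] (e : α ≃ Fin n) (i : Fin (n + 1)) : Finset α :=
  {a | (e a : ℕ) < i}

theorem mem_chainOfEquiv [Fintype α] {e : α ≃ Fin n} {i : Fin (n + 1)} {a : α} :
    a ∈ chainOfEquiv e i ↔ (e a : ℕ) < i := by
  simp [chainOfEquiv]

theorem chainOfEquiv_mem_rankedChains [Fintype α] (e : α ≃ Fin n) :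
    chainOfEquiv e ∈ rankedChains card n := by
  refine ⟨fun i a => ?_, fun i => ?_⟩
  · simp only [mem_chainOfEquiv, Fin.val_castSucc, Fin.val_succ]
    omega
  · rw [card_equiv e (t := {k : Fin n | k < (i : ℕ)}) (by simp [mem_chainOfEquiv]),
      Fin.card_filter_val_lt]
    omega

theorem chainOfEquiv_injective [Fintype α] :
    Function.Injective (chainOfEquiv (α := α) (n := n)) := by
  intro e e' h
  ext a
  have key : ∀ i : Fin (n + 1), (e a : ℕ) < i ↔ (e' a : ℕ) < i := fun i => by
    rw [← mem_chainOfEquiv, ← mem_chainOfEquiv, h]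
  have h1 := key (e a).succ
  have h2 := key (e' a).succ
  simp only [Fin.val_succ] at h1 h2
  omega

theorem exists_sdiff_eq_singleton_of_mem_rankedChains [DecidableEq α]
    {S : Fin (n + 1) → Finset α} (hS : S ∈ rankedChains card n) (k : Fin n) :
    ∃ x, S k.succ \ S k.castSucc = {x} := by
  rw [← card_eq_one, card_sdiff_of_subset (hS.1 k), hS.2, hS.2]
  simp

theorem mem_iff_lt_of_sdiff_eq_singleton [DecidableEq α] {S : Fin (n + 1) → Finset α}
    (hS : S ∈ rankedChains card n) {x : Fin n → α} (hx : ∀ k, S k.succ \ S k.castSucc = {x k})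
    (k : Fin n) (i : Fin (n + 1)) : x k ∈ S i ↔ (k : ℕ) < i := by
  have hmono : Monotone S := Fin.monotone_iff_le_succ.mpr hS.1
  have hnew := (hx k).symm ▸ mem_singleton_self (x k)
  rw [mem_sdiff] at hnew
  constructor
  · intro hi
    by_contra! hik
    exact hnew.2 (hmono (Fin.le_def.mpr (by simpa using hik)) hi)
  · intro hki
    exact hmono (Fin.le_def.mpr (by simpa using hki)) hnew.1

theorem range_chainOfEquiv [Fintype α] [DecidableEq α] (hα : Fintype.card α = n) :
    Set.range (chainOfEquiv (α := α) (n := n)) = rankedChains card n := by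
  refine Set.Subset.antisymm (Set.range_subset_iff.mpr chainOfEquiv_mem_rankedChains)
    fun S hS => ?_
  choose x hx using exists_sdiff_eq_singleton_of_mem_rankedChains hS
  have hmem := mem_iff_lt_of_sdiff_eq_singleton hS hx
  have hinj : Function.Injective x := fun k l hkl => by
    have key : ∀ i : Fin (n + 1), (k : ℕ) < i ↔ (l : ℕ) < i := fun i => by
      rw [← hmem, ← hmem, hkl]
    have h1 := key k.succ
    have h2 := key l.succ
    simp only [Fin.val_succ] at h1 h2
    exact Fin.ext (by omega)
  have hbij : Function.Bijective x :=
    (Fintype.bijective_iff_injective_and_card x).mpr ⟨hinj, by simp [hα]⟩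
  refine ⟨(Equiv.ofBijective x hbij).symm, funext fun i => Finset.ext fun a => ?_⟩
  obtain ⟨k, rfl⟩ := hbij.2 a
  rw [mem_chainOfEquiv, hmem, Equiv.ofBijective_symm_apply_apply]

theorem ncard_rankedChains_card [Fintype α] [DecidableEq α] (hα : Fintype.card α = n) :
    (rankedChains card n : Set (Fin (n + 1) → Finset α)).ncard = n.factorial := by
  rw [← range_chainOfEquiv hα, Set.ncard_range_of_injective chainOfEquiv_injective,
    Nat.card_eq_fintype_card, Fintype.card_equiv (Fintype.equivFinOfCardEq hα), hα]

end Finset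

theorem iSupIndep.biSup_le_biSup_iff {ι α : Type*} [CompleteLattice α] {E : ι → α}
    (hE : iSupIndep E) (hne : ∀ i, E i ≠ ⊥) {s t : Finset ι} :
    (⨆ i ∈ s, E i) ≤ ⨆ i ∈ t, E i ↔ s ⊆ t := by
  refine ⟨fun h j hj => ?_, fun h => biSup_mono fun i hi => h hi⟩
  by_contra hjt
  exact hne j <| disjoint_self.mp <|
    (hE.disjoint_biSup (y := ↑t) hjt).mono_right ((le_biSup E hj).trans h)

theorem exists_eq_biSup_of_eq_iSup_inf {ι α : Type*} [Fintype ι] [CompleteLattice α]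
    {E : ι → α} (hE : ∀ i, IsAtom (E i)) {W : α} (hW : W = ⨆ i, W ⊓ E i) :
    ∃ s : Finset ι, ⨆ i ∈ s, E i = W := by
  classical
  refine ⟨({i | E i ≤ W} : Finset ι), le_antisymm (iSup₂_le fun i hi => by simpa using hi) ?_⟩
  calc W = ⨆ i, W ⊓ E i := hW
    _ ≤ _ := iSup_le fun i => by
      by_cases hi : E i ≤ W
      · exact inf_le_right.trans (le_biSup E (by simpa using hi))
      · rw [((hE i).not_le_iff_disjoint.mp hi).symm.eq_bot]
        exact bot_le

section Independent

variable {F V : Type*} [DivisionRing F] [AddCommGroup V] [Module F V] [FiniteDimensional F V]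
  {ι : Type*} {E : ι → Submodule F V}

theorem iSupIndep.finrank_biSup [DecidableEq ι] (hE : iSupIndep E) (s : Finset ι) :
    finrank F ↥(⨆ i ∈ s, E i) = ∑ i ∈ s, finrank F (E i) := by
  induction s using Finset.induction_on with
  | empty => simp
  | insert a s ha ih =>
    have hdisj : Disjoint (E a) (⨆ i ∈ s, E i) := hE.disjoint_biSup (y := ↑s) ha
    rw [Finset.sum_insert ha, ← ih, Finset.iSup_insert,
      ← Submodule.finrank_sup_add_finrank_inf_eq, hdisj.eq_bot, finrank_bot, add_zero]

theorem iSupIndep.finrank_eq_one_and_iSup_eq_top [Fintype ι] (hE : iSupIndep E)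
    (hne : ∀ i, E i ≠ ⊥) (hcard : Fintype.card ι = finrank F V) :
    (∀ i, finrank F (E i) = 1) ∧ ⨆ i, E i = ⊤ := by
  classical
  have hpos : ∀ i, 1 ≤ finrank F (E i) := fun i => Submodule.one_le_finrank_iff.mpr (hne i)
  have hsum : ∑ i, finrank F (E i) = finrank F V := by
    refine le_antisymm ?_ ?_
    · rw [← hE.finrank_biSup]
      exact Submodule.finrank_le _
    · simpa [hcard] using Finset.sum_le_sum fun i (_ : i ∈ Finset.univ) => hpos i
  refine ⟨fun i => ?_, Submodule.eq_top_of_finrank_eq ?_⟩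
  · refine ((Finset.sum_eq_sum_iff_of_le fun j _ => hpos j).mp ?_ i (Finset.mem_univ i)).symm
    simp [hsum, hcard]
  · rw [← hsum, ← hE.finrank_biSup, iSup_congr fun i => iSup_pos (Finset.mem_univ i)]

end Independent

namespace Module.End

variable {F V : Type*} [Field F] [AddCommGroup V] [Module F V] [FiniteDimensional F V]
  {f : End F V} {ι : Type*} {μ : ι → F}

theorem eq_iSup_inf_eigenspace (htop : ⨆ i, f.eigenspace (μ i) = ⊤) {W : Submodule F V}
    (hW : W ∈ f.invtSubmodule) : W = ⨆ i, W ⊓ f.eigenspace (μ i) := by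
  have hspan : ⨆ c, f.genEigenspace c 1 = ⊤ :=
    top_unique (htop ▸ iSup_comp_le (fun c => f.eigenspace c) μ)
  refine le_antisymm ?_ (iSup_le fun i => inf_le_left)
  calc W = ⨆ c, W ⊓ f.genEigenspace c 1 := Submodule.eq_iSup_inf_genEigenspace 1 hW hspan
    _ ≤ ⨆ i, W ⊓ f.eigenspace (μ i) := iSup_le fun c => ?_
  by_cases hc : c ∈ Set.range μ
  · obtain ⟨i, rfl⟩ := hc
    exact le_iSup (fun i => W ⊓ f.eigenspace (μ i)) i
  · have hbot : f.genEigenspace c 1 = ⊥ := by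
      have := f.eigenspaces_iSupIndep.disjoint_biSup hc
      rwa [iSup_range, htop, disjoint_top] at this
    rw [hbot, inf_bot_eq]
    exact bot_le

theorem mem_invtSubmodule_iff_exists_eq_biSup_eigenspace [Fintype ι]
    (hat : ∀ i, IsAtom (f.eigenspace (μ i))) (htop : ⨆ i, f.eigenspace (μ i) = ⊤)
    {W : Submodule F V} :
    W ∈ f.invtSubmodule ↔ ∃ s : Finset ι, ⨆ i ∈ s, f.eigenspace (μ i) = W := by
  refine ⟨fun hW => exists_eq_biSup_of_eq_iSup_inf hat (eq_iSup_inf_eigenspace htop hW), ?_⟩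
  rintro ⟨s, rfl⟩
  exact f.invtSubmodule.supClosed.biSup_mem s.finite_toSet (invtSubmodule.bot_mem f)
    fun i _ => eigenspace_mem_invtSubmodule f (μ i)

end Module.End

theorem card_invariant_flags_of_distinct_eigenvalues_general
    {F : Type*} [Field F] {V : Type*} [AddCommGroup V] [Module F V]
    [FiniteDimensional F V] (K : ℕ)
    (hdim : Module.finrank F V = K)
    (f : Module.End F V) (μ : Fin K → F) (hμ : Function.Injective μ)
    (hchar : LinearMap.charpoly (f : V →ₗ[F] V)
      = ∏ i : Fin K, (Polynomial.X - Polynomial.C (μ i))) :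
    Set.Finite {W : Fin (K + 1) → Submodule F V |
        (∀ i : Fin K, W i.castSucc ≤ W i.succ) ∧
        (∀ i : Fin (K + 1), Module.finrank F (W i) = (i : ℕ)) ∧
        (∀ i : Fin (K + 1), ∀ x ∈ W i, f x ∈ W i)} ∧
    Set.ncard {W : Fin (K + 1) → Submodule F V |
        (∀ i : Fin K, W i.castSucc ≤ W i.succ) ∧
        (∀ i : Fin (K + 1), Module.finrank F (W i) = (i : ℕ)) ∧
        (∀ i : Fin (K + 1), ∀ x ∈ W i, f x ∈ W i)} = Nat.factorial K := by
  classical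
  have hne : ∀ j, f.eigenspace (μ j) ≠ ⊥ := fun j => by
    rw [← Module.End.hasEigenvalue_iff, Module.End.hasEigenvalue_iff_isRoot_charpoly, hchar,
      Polynomial.IsRoot.def, Polynomial.eval_prod]
    exact Finset.prod_eq_zero (Finset.mem_univ j) (by simp)
  have hE : iSupIndep fun j => f.eigenspace (μ j) := f.eigenspaces_iSupIndep.comp hμ
  obtain ⟨hrank, htop⟩ := hE.finrank_eq_one_and_iSup_eq_top hne (by simp [hdim])
  let Φ : Finset (Fin K) ↪o Submodule F V :=
    OrderEmbedding.ofMapLEIff (fun s => ⨆ j ∈ s, f.eigenspace (μ j))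
      fun _ _ => hE.biSup_le_biSup_iff hne
  have hflags : {W : Fin (K + 1) → Submodule F V |
        (∀ i : Fin K, W i.castSucc ≤ W i.succ) ∧
        (∀ i : Fin (K + 1), Module.finrank F (W i) = (i : ℕ)) ∧
        (∀ i : Fin (K + 1), ∀ x ∈ W i, f x ∈ W i)} = (Φ ∘ ·) '' rankedChains Finset.card K := by
    rw [Φ.image_comp_rankedChains (r' := fun W => finrank F W)
      fun s => (hE.finrank_biSup s).trans (by simp [hrank])]
    ext W
    simp only [rankedChains, Set.mem_ofPred_eq, Set.mem_range,
      ← Module.End.mem_invtSubmodule_iff_forall_mem_of_mem,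
      Module.End.mem_invtSubmodule_iff_exists_eq_biSup_eigenspace
        (fun j => Submodule.isAtom_iff_finrank_eq_one.mpr (hrank j)) htop, and_assoc,
      Φ, OrderEmbedding.coe_ofMapLEIff]
  rw [hflags]
  exact ⟨Set.toFinite _, by rw [Set.ncard_image_of_injective _ Φ.injective.comp_left,
    Finset.ncard_rankedChains_card (Fintype.card_fin K)]⟩

/-- If `f` is an endomorphism of a `K`-dimensional vector space `V` over `F`
whose characteristic polynomial has `K` pairwise distinct roots in `F`, then
the set of complete `f`-invariant flags in `V` is finite with exactly `K!`
elements. -/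
theorem card_invariant_flags_of_distinct_eigenvalues
    {F : Type*} [Field F] {V : Type*} [AddCommGroup V] [Module F V]
    [FiniteDimensional F V] (K : ℕ) (hK : 1 ≤ K)
    (hdim : Module.finrank F V = K)
    (f : Module.End F V) (μ : Fin K → F) (hμ : Function.Injective μ)
    (hchar : LinearMap.charpoly (f : V →ₗ[F] V)
      = ∏ i : Fin K, (Polynomial.X - Polynomial.C (μ i))) :
    Set.Finite {W : Fin (K + 1) → Submodule F V |
        (∀ i : Fin K, W i.castSucc ≤ W i.succ) ∧
        (∀ i : Fin (K + 1), Module.finrank F (W i) = (i : ℕ)) ∧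
        (∀ i : Fin (K + 1), ∀ x ∈ W i, f x ∈ W i)} ∧
    Set.ncard {W : Fin (K + 1) → Submodule F V |
        (∀ i : Fin K, W i.castSucc ≤ W i.succ) ∧
        (∀ i : Fin (K + 1), Module.finrank F (W i) = (i : ℕ)) ∧
        (∀ i : Fin (K + 1), ∀ x ∈ W i, f x ∈ W i)} = Nat.factorial K :=
  card_invariant_flags_of_distinct_eigenvalues_general K hdim f μ hμ hchar
end

section
/- Let F be a field and z₁, z₂, z₃, z₄, y₁, y₂, y₃, y₄ ∈ F, each different from 0 and 1. Then the figure-eight gluing monomials satisfy the two automatic relations c₁c₂c₃c₄ = 1 and c₁c₂c₃c₄·c₅c₆c₇c₈ = 1 (one relation for each of the two torus slices); in particular also c₅c₆c₇c₈ = 1. -/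
/-!
Every shape parameter `t` occurs in `c₁c₂c₃c₄` exactly once as `t`, once as `t'` and once as
`t''`, and the same holds for `c₅c₆c₇c₈`. So each of these products regroups into the eight
factors `t t' t'' = -1`, one per tetrahedron parameter, and equals `(-1)⁸ = 1`.
-/

def tripleProd {F : Type*} [Field F] (t : F) : F := t * oPrime t * oDPrime t

theorem tripleProd_eq_neg_one {F : Type*} [Field F] {t : F} (h0 : t ≠ 0) (h1 : t ≠ 1) :
    tripleProd t = -1 := by
  have h1' : 1 - t ≠ 0 := sub_ne_zero.mpr h1.symm
  unfold tripleProd oPrime oDPrime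
  field_simp
  ring

/-- The gluing monomials of the two-tetrahedron `K = 3` decomposition of the
figure-eight knot complement satisfy the two automatic relations
`c₁c₂c₃c₄ = 1` and `c₁c₂c₃c₄·c₅c₆c₇c₈ = 1` (one for each torus slice);
in particular also `c₅c₆c₇c₈ = 1`. -/
theorem figure_eight_gluing_relations
    {F : Type*} [Field F] (z₁ z₂ z₃ z₄ y₁ y₂ y₃ y₄ : F)
    (hz₁0 : z₁ ≠ 0) (hz₁1 : z₁ ≠ 1) (hz₂0 : z₂ ≠ 0) (hz₂1 : z₂ ≠ 1)
    (hz₃0 : z₃ ≠ 0) (hz₃1 : z₃ ≠ 1) (hz₄0 : z₄ ≠ 0) (hz₄1 : z₄ ≠ 1)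
    (hy₁0 : y₁ ≠ 0) (hy₁1 : y₁ ≠ 1) (hy₂0 : y₂ ≠ 0) (hy₂1 : y₂ ≠ 1)
    (hy₃0 : y₃ ≠ 0) (hy₃1 : y₃ ≠ 1) (hy₄0 : y₄ ≠ 0) (hy₄1 : y₄ ≠ 1) :
    (z₁ * oPrime z₁ * oPrime z₃ * (oPrime y₂ * y₄ * oPrime y₄)) *
      (z₂ * oPrime z₂ * oPrime z₄ * (oPrime y₁ * y₃ * oPrime y₃)) *
      (oDPrime z₂ * z₃ * oDPrime z₃ * (y₁ * oDPrime y₁ * oDPrime y₄)) *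
      (oDPrime z₁ * z₄ * oDPrime z₄ * (y₂ * oDPrime y₂ * oDPrime y₃)) = 1 ∧
    ((z₁ * oPrime z₁ * oPrime z₃ * (oPrime y₂ * y₄ * oPrime y₄)) *
      (z₂ * oPrime z₂ * oPrime z₄ * (oPrime y₁ * y₃ * oPrime y₃)) *
      (oDPrime z₂ * z₃ * oDPrime z₃ * (y₁ * oDPrime y₁ * oDPrime y₄)) *
      (oDPrime z₁ * z₄ * oDPrime z₄ * (y₂ * oDPrime y₂ * oDPrime y₃))) *
    ((z₂ * oPrime z₄ * oDPrime z₃ * (y₄ * oPrime y₂ * oDPrime y₁)) *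
      (z₁ * oPrime z₃ * oDPrime z₄ * (y₃ * oPrime y₁ * oDPrime y₂)) *
      (z₄ * oPrime z₂ * oDPrime z₁ * (y₁ * oPrime y₃ * oDPrime y₄)) *
      (z₃ * oPrime z₁ * oDPrime z₂ * (y₂ * oPrime y₄ * oDPrime y₃))) = 1 ∧
    (z₂ * oPrime z₄ * oDPrime z₃ * (y₄ * oPrime y₂ * oDPrime y₁)) *
      (z₁ * oPrime z₃ * oDPrime z₄ * (y₃ * oPrime y₁ * oDPrime y₂)) *
      (z₄ * oPrime z₂ * oDPrime z₁ * (y₁ * oPrime y₃ * oDPrime y₄)) *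
      (z₃ * oPrime z₁ * oDPrime z₂ * (y₂ * oPrime y₄ * oDPrime y₃)) = 1 := by
  set P := tripleProd z₁ * tripleProd z₂ * tripleProd z₃ * tripleProd z₄ *
    (tripleProd y₁ * tripleProd y₂ * tripleProd y₃ * tripleProd y₄) with hP
  have hP_eq_one : P = 1 := by
    rw [hP, tripleProd_eq_neg_one hz₁0 hz₁1, tripleProd_eq_neg_one hz₂0 hz₂1,
      tripleProd_eq_neg_one hz₃0 hz₃1, tripleProd_eq_neg_one hz₄0 hz₄1,
      tripleProd_eq_neg_one hy₁0 hy₁1, tripleProd_eq_neg_one hy₂0 hy₂1,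
      tripleProd_eq_neg_one hy₃0 hy₃1, tripleProd_eq_neg_one hy₄0 hy₄1]
    norm_num
  have first_slice : (z₁ * oPrime z₁ * oPrime z₃ * (oPrime y₂ * y₄ * oPrime y₄)) *
      (z₂ * oPrime z₂ * oPrime z₄ * (oPrime y₁ * y₃ * oPrime y₃)) *
      (oDPrime z₂ * z₃ * oDPrime z₃ * (y₁ * oDPrime y₁ * oDPrime y₄)) *
      (oDPrime z₁ * z₄ * oDPrime z₄ * (y₂ * oDPrime y₂ * oDPrime y₃)) = P := by
    simp only [hP, tripleProd]; ring
  have second_slice : (z₂ * oPrime z₄ * oDPrime z₃ * (y₄ * oPrime y₂ * oDPrime y₁)) *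
      (z₁ * oPrime z₃ * oDPrime z₄ * (y₃ * oPrime y₁ * oDPrime y₂)) *
      (z₄ * oPrime z₂ * oDPrime z₁ * (y₁ * oPrime y₃ * oDPrime y₄)) *
      (z₃ * oPrime z₁ * oDPrime z₂ * (y₂ * oPrime y₄ * oDPrime y₃)) = P := by
    simp only [hP, tripleProd]; ring
  rw [first_slice, second_slice, hP_eq_one, one_mul]
  exact ⟨rfl, rfl, rfl⟩
end
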